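/- arXiv:q-bio/0604024 — 3 statements merged into one kernel-verified Lean document; each statement's English description precedes it below -/
import Mathlib

section
/- Let π₁, π₂ ∈ S_m and let i be a point fixed by π₂ but not by π₁, with π₁⁻¹(i) = i₀ and π₁(i) = i₁ where i₀ ≠ i₁. Then d_trans(π₁, π₂) = d_trans((i,i₁)·π₁, π₂) + 1, where (i,i₁) denotes the transposition swapping i and i₁. -/
open Equiv

/-- The least number of transpositions whose product equals `σ`
(0 if `σ` is the identity, via the empty product). -/
noncomputable def minSwaps {α : Type*} [DecidableEq α] (σ : Equiv.Perm α) : ℕ :=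
  sInf {k | ∃ l : List (Equiv.Perm α), (∀ τ ∈ l, τ.IsSwap) ∧ l.prod = σ ∧ l.length = k}

/-- `dTrans π₁ π₂` is the least number of transpositions needed to express `π₂⁻¹ * π₁`. -/
noncomputable def dTrans {α : Type*} [DecidableEq α] (π₁ π₂ : Equiv.Perm α) : ℕ :=
  minSwaps (π₂⁻¹ * π₁)

private lemma swap_of_isSwap_moves {α : Type*} [DecidableEq α] {s : Equiv.Perm α} {i : α}
    (hs : s.IsSwap) (hi : s i ≠ i) : s = Equiv.swap i (s i) := by
  obtain ⟨a, b, hab, rfl⟩ := hs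
  rcases eq_or_ne i a with rfl | ha
  · rw [Equiv.swap_apply_left]
  rcases eq_or_ne i b with rfl | hb
  · rw [Equiv.swap_apply_right, Equiv.swap_comm]
  · exact absurd (Equiv.swap_apply_of_ne_of_ne ha hb) hi

/-- Exchange lemma: if `σ` is a product of `k` swaps and moves `i`, then
`swap i (σ i) * σ` is a product of `k - 1` swaps. -/
private lemma exchange {α : Type*} [DecidableEq α] :
    ∀ (l : List (Equiv.Perm α)) (σ : Equiv.Perm α) (i : α),
      (∀ τ ∈ l, τ.IsSwap) → l.prod = σ → σ i ≠ i →
      ∃ l' : List (Equiv.Perm α), (∀ τ ∈ l', τ.IsSwap) ∧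
        l'.prod = Equiv.swap i (σ i) * σ ∧ l'.length + 1 = l.length := by
  intro l
  induction l with
  | nil =>
    intro σ i _ hprod hmove
    simp only [List.prod_nil] at hprod
    exact absurd rfl (hprod ▸ hmove)
  | cons s l₂ ih =>
    intro σ i hswap hprod hmove
    have hs : s.IsSwap := hswap s List.mem_cons_self
    have hl₂ : ∀ τ ∈ l₂, τ.IsSwap := fun τ hτ => hswap τ (List.mem_cons_of_mem _ hτ)
    set ρ := l₂.prod with hρ
    have hσ : σ = s * ρ := by rw [← hprod, List.prod_cons]
    rcases eq_or_ne (ρ i) i with hρi | hρi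
    · -- ρ fixes i, so s moves i and s = swap i (σ i)
      have hsi : s i ≠ i := by
        intro h
        apply hmove
        rw [hσ]; simp [Equiv.Perm.mul_apply, hρi, h]
      have hσi : σ i = s i := by rw [hσ]; simp [Equiv.Perm.mul_apply, hρi]
      refine ⟨l₂, hl₂, ?_, by simp⟩
      have hseq : Equiv.swap i (σ i) = s := by
        rw [hσi]; exact (swap_of_isSwap_moves hs hsi).symm
      rw [hseq, hσ, ← mul_assoc]
      obtain ⟨a, b, hab, rfl⟩ := hs
      simp [Equiv.swap_mul_self]
      rfl
    · -- ρ moves i; apply IH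
      obtain ⟨l₃, hl₃s, hl₃p, hl₃len⟩ := ih ρ i hl₂ rfl hρi
      have hkey : s * Equiv.swap i (ρ i) = Equiv.swap (s i) (s (ρ i)) * s := by
        rw [Equiv.swap_apply_apply]; group
      rcases eq_or_ne (s i) i with hsi | hsi
      · -- s fixes i
        refine ⟨s :: l₃, ?_, ?_, by simp [← hl₃len]⟩
        · intro τ hτ
          rcases List.mem_cons.1 hτ with rfl | hτ
          · exact hs
          · exact hl₃s τ hτ
        · rw [List.prod_cons, hl₃p, ← mul_assoc, hkey, hsi, hσ, mul_assoc]
          rfl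
      · -- s moves i
        set c := s i with hc
        set a := σ i with ha
        have hsa : a = s (ρ i) := by rw [ha, hσ]; rfl
        have hai : a ≠ i := hmove
        have hac : a ≠ c := by
          rw [hsa, hc]
          exact fun h => hρi (s.injective h)
        have hseq : s = Equiv.swap i c := swap_of_isSwap_moves hs hsi
        -- swap c a * σ = s * (swap i (ρ i) * ρ)
        have h1 : Equiv.swap c a * σ = s * (Equiv.swap i (ρ i) * ρ) := by
          rw [← mul_assoc, hkey, hσ, ← hsa, mul_assoc]
        -- P = swap i a * swap c a * swap i c = swap c a
        have hP : Equiv.swap i a * Equiv.swap c a * Equiv.swap i c = Equiv.swap c a := by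
          have hic : i ≠ c := fun h => hsi h.symm
          have h4 := Equiv.swap_apply_apply (Equiv.swap c a) i c
          rw [Equiv.swap_apply_of_ne_of_ne hic (Ne.symm hai),
            Equiv.swap_apply_left, Equiv.swap_inv] at h4
          rw [h4]
          simp only [mul_assoc, Equiv.swap_mul_self_mul, Equiv.swap_mul_self, mul_one]
        refine ⟨Equiv.swap c a :: l₃, ?_, ?_, by simp [← hl₃len]⟩
        · intro τ hτ
          rcases List.mem_cons.1 hτ with rfl | hτ
          · exact ⟨c, a, hac.symm, rfl⟩
          · exact hl₃s τ hτ
        · rw [List.prod_cons, hl₃p]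
          have h3 : Equiv.swap i a * Equiv.swap c a * s = Equiv.swap c a := by
            rw [hseq]; exact hP
          calc Equiv.swap c a * (Equiv.swap i (ρ i) * ρ)
              = (Equiv.swap i a * Equiv.swap c a * s) * (Equiv.swap i (ρ i) * ρ) := by rw [h3]
            _ = Equiv.swap i a * Equiv.swap c a * (s * (Equiv.swap i (ρ i) * ρ)) := by group
            _ = Equiv.swap i a * Equiv.swap c a * (Equiv.swap c a * σ) := by rw [h1]
            _ = Equiv.swap i a * σ := by
                rw [mul_assoc (Equiv.swap i a), ← mul_assoc (Equiv.swap c a),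
                  Equiv.swap_mul_self, one_mul]
            _ = Equiv.swap i (σ i) * σ := by rw [ha]

private lemma minSwaps_swap_mul {α : Type*} [DecidableEq α] [Fintype α]
    (σ : Equiv.Perm α) (i : α) (h : σ i ≠ i) :
    minSwaps σ = minSwaps (Equiv.swap i (σ i) * σ) + 1 := by
  set A := {k | ∃ l : List (Equiv.Perm α), (∀ τ ∈ l, τ.IsSwap) ∧ l.prod = σ ∧ l.length = k}
    with hA
  set τ := Equiv.swap i (σ i) * σ with hτ
  set B := {k | ∃ l : List (Equiv.Perm α), (∀ τ' ∈ l, τ'.IsSwap) ∧ l.prod = τ ∧ l.length = k}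
    with hB
  have hAne : A.Nonempty := by
    obtain ⟨l, hp, hs⟩ := (Equiv.Perm.truncSwapFactors σ).out
    exact ⟨l.length, l, hs, hp, rfl⟩
  have hBne : B.Nonempty := by
    obtain ⟨l, hp, hs⟩ := (Equiv.Perm.truncSwapFactors τ).out
    exact ⟨l.length, l, hs, hp, rfl⟩
  have hST : σ = Equiv.swap i (σ i) * τ := by
    rw [hτ, ← mul_assoc, Equiv.swap_mul_self, one_mul]
  show sInf A = sInf B + 1
  apply le_antisymm
  · -- sInf A ≤ sInf B + 1
    obtain ⟨l, hls, hlp, hll⟩ := Nat.sInf_mem hBne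
    refine Nat.sInf_le ⟨Equiv.swap i (σ i) :: l, ?_, ?_, by simp [hll]⟩
    · intro τ' hτ'
      rcases List.mem_cons.1 hτ' with rfl | hτ'
      · exact ⟨i, σ i, Ne.symm h, rfl⟩
      · exact hls τ' hτ'
    · rw [List.prod_cons, hlp, ← hST]
  · -- sInf B + 1 ≤ sInf A
    obtain ⟨l, hls, hlp, hll⟩ := Nat.sInf_mem hAne
    obtain ⟨l', hl's, hl'p, hl'len⟩ := exchange l σ i hls hlp h
    have : sInf B ≤ l'.length := Nat.sInf_le ⟨l', hl's, hl'p, rfl⟩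
    omega

/-- If i is fixed by π₂ but not by π₁, with π₁⁻¹(i) = i₀ and π₁(i) = i₁ where i₀ ≠ i₁,
then d_trans(π₁, π₂) = d_trans((i,i₁)·π₁, π₂) + 1. -/
theorem dTrans_smoothing {m : ℕ} (π₁ π₂ : Equiv.Perm (Fin m)) (i i₀ i₁ : Fin m)
    (hfix : π₂ i = i) (hmove : π₁ i ≠ i)
    (hi₀ : π₁⁻¹ i = i₀) (hi₁ : π₁ i = i₁) (hne : i₀ ≠ i₁) :
    dTrans π₁ π₂ = dTrans (Equiv.swap i i₁ * π₁) π₂ + 1 := by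
  set σ := π₂⁻¹ * π₁ with hσ
  have hinv : π₂⁻¹ i = i := by
    conv_lhs => rw [← hfix]
    exact π₂.symm_apply_apply i
  have hσi : σ i = π₂⁻¹ i₁ := by rw [hσ, Equiv.Perm.mul_apply, hi₁]
  have hmove' : σ i ≠ i := by
    intro hc
    apply hmove
    rw [hσi] at hc
    have : i₁ = π₂ i := by rw [← hc, Equiv.Perm.inv_def, Equiv.apply_symm_apply]
    rw [hi₁, this, hfix]
  have hkey : π₂⁻¹ * (Equiv.swap i i₁ * π₁) = Equiv.swap i (σ i) * σ := by
    have : Equiv.swap (π₂⁻¹ i) (π₂⁻¹ i₁) = π₂⁻¹ * Equiv.swap i i₁ * (π₂⁻¹)⁻¹ :=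
      Equiv.swap_apply_apply π₂⁻¹ i i₁
    rw [hinv] at this
    rw [hσi, this, hσ]
    group
  unfold dTrans
  rw [hkey]
  exact minSwaps_swap_mul σ i hmove'
end

section
/- Let π₁, π₂ ∈ S_m and let i be a point fixed by π₂ such that π₁(i) = i₁ and π₁(i₁) = i with i ≠ i₁ (i.e., (i,i₁) is a 2-cycle of π₁). Then d_trans(π₁, π₂) = d_trans((i,i₁)·π₁, π₂) + 1. -/
open Equiv

section Aux

variable {α : Type*} [DecidableEq α]

lemma isSwap_eq_swap_apply {t : Equiv.Perm α} (ht : t.IsSwap) {x : α} (hx : t x ≠ x) :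
    t = Equiv.swap x (t x) := by
  obtain ⟨a, b, hab, rfl⟩ := ht
  rcases eq_or_ne x a with rfl | hxa
  · rw [Equiv.swap_apply_left]
  · rcases eq_or_ne x b with rfl | hxb
    · rw [Equiv.swap_apply_right, Equiv.swap_comm]
    · exact absurd (Equiv.swap_apply_of_ne_of_ne hxa hxb) hx

lemma isSwap_mul_self {t : Equiv.Perm α} (ht : t.IsSwap) : t * t = 1 := by
  obtain ⟨a, b, _, rfl⟩ := ht
  exact Equiv.swap_mul_self a b

lemma isSwap_conj_aux {t : Equiv.Perm α} (ht : t.IsSwap) {x c : α} (hc : c ≠ x)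
    (htc : t c ≠ x) : (Equiv.swap x (t c) * t * Equiv.swap x c).IsSwap := by
  rcases eq_or_ne (t x) x with hx | hx
  · -- t fixes x, so the expression equals t
    have key : Equiv.swap x (t c) * t * Equiv.swap x c = t := by
      rw [mul_assoc, Equiv.mul_swap_eq_swap_mul t x c, hx, ← mul_assoc,
        Equiv.swap_mul_self, one_mul]
    rw [key]; exact ht
  · -- t = swap x (t x)
    have htx : t = Equiv.swap x (t x) := isSwap_eq_swap_apply ht hx
    have ht2 : t (t x) = x := by
      rw [← Equiv.Perm.mul_apply, isSwap_mul_self ht, Equiv.Perm.one_apply]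
    have hdc : t x ≠ c := fun h => htc (h ▸ ht2)
    have htcc : t c = c := by
      conv_lhs => rw [htx]
      exact Equiv.swap_apply_of_ne_of_ne hc fun h => hdc h.symm
    rw [htcc]
    rw [htx]
    have key : Equiv.swap x c * Equiv.swap x (t x) * Equiv.swap x c
        = Equiv.swap c (t x) := by
      have h := Equiv.swap_apply_apply (Equiv.swap x c) x (t x)
      rw [Equiv.swap_apply_left, Equiv.swap_apply_of_ne_of_ne hx hdc,
        Equiv.swap_inv] at h
      exact h.symm
    rw [key]
    exact ⟨c, t x, fun h => hdc h.symm, rfl⟩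

/-- Key lemma: from a factorization of `σ` into `k` swaps, with `σ x ≠ x`, one can
produce a factorization of `swap x (σ x) * σ` into `k - 1` swaps. -/
lemma key_reduction : ∀ (l : List (Equiv.Perm α)), (∀ t ∈ l, t.IsSwap) →
    ∀ x : α, l.prod x ≠ x →
    ∃ m : List (Equiv.Perm α), (∀ t ∈ m, t.IsSwap) ∧
      m.prod = Equiv.swap x (l.prod x) * l.prod ∧ m.length + 1 = l.length := by
  intro l
  induction l with
  | nil => intro _ x hx; simp at hx
  | cons t l ih =>
    intro hl x hx
    have ht : t.IsSwap := hl t (List.mem_cons_self)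
    have hl' : ∀ u ∈ l, u.IsSwap := fun u hu => hl u (List.mem_cons_of_mem t hu)
    rw [List.prod_cons] at hx ⊢
    rcases eq_or_ne (l.prod x) x with h | h
    · -- base case: t must move x, and t = swap x (σ x)
      have hTx : (t * l.prod) x = t x := by rw [Equiv.Perm.mul_apply, h]
      have htx : t x ≠ x := by rw [← hTx]; exact hx
      refine ⟨l, hl', ?_, by simp⟩
      rw [hTx, ← isSwap_eq_swap_apply ht htx, ← mul_assoc, isSwap_mul_self ht, one_mul]
    · obtain ⟨m, hm, hmprod, hmlen⟩ := ih hl' x h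
      set c := l.prod x with hcdef
      have hcx : c ≠ x := h
      have hTx : (t * l.prod) x = t c := by rw [Equiv.Perm.mul_apply]
      have htc : t c ≠ x := by rw [← hTx]; exact hx
      refine ⟨(Equiv.swap x (t c) * t * Equiv.swap x c) :: m,
        ?_, ?_, by simpa using hmlen⟩
      · intro u hu
        rcases List.mem_cons.1 hu with rfl | hu
        · exact isSwap_conj_aux ht hcx htc
        · exact hm u hu
      · rw [List.prod_cons, hmprod, hTx]
        calc Equiv.swap x (t c) * t * Equiv.swap x c * (Equiv.swap x c * l.prod)
            = Equiv.swap x (t c) * t * (Equiv.swap x c * Equiv.swap x c) * l.prod := by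
              group
          _ = Equiv.swap x (t c) * (t * l.prod) := by
              rw [Equiv.swap_mul_self, mul_one, mul_assoc]

variable [Fintype α]

lemma minSwaps_set_nonempty (σ : Equiv.Perm α) :
    {k | ∃ l : List (Equiv.Perm α), (∀ τ ∈ l, τ.IsSwap) ∧ l.prod = σ ∧ l.length = k}.Nonempty := by
  obtain ⟨l, hprod, hswap⟩ := (Equiv.Perm.truncSwapFactors σ).out
  exact ⟨l.length, l, hswap, hprod, rfl⟩

lemma minSwaps_step (σ : Equiv.Perm α) {x : α} (hx : σ x ≠ x) :
    minSwaps σ = minSwaps (Equiv.swap x (σ x) * σ) + 1 := by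
  have hmem := Nat.sInf_mem (minSwaps_set_nonempty σ)
  obtain ⟨l, hswap, hprod, hlen⟩ := hmem
  have hx' : l.prod x ≠ x := by rw [hprod]; exact hx
  obtain ⟨mth, hm, hmprod, hmlen⟩ := key_reduction l hswap x hx'
  rw [hprod] at hmprod
  have h1 : minSwaps (Equiv.swap x (σ x) * σ) ≤ mth.length :=
    Nat.sInf_le ⟨mth, hm, hmprod, rfl⟩
  have hmem2 := Nat.sInf_mem (minSwaps_set_nonempty (Equiv.swap x (σ x) * σ))
  obtain ⟨m2, hm2, hm2prod, hm2len⟩ := hmem2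
  have h2 : minSwaps σ ≤ minSwaps (Equiv.swap x (σ x) * σ) + 1 := by
    refine Nat.sInf_le ⟨Equiv.swap x (σ x) :: m2, ?_, ?_, by rw [List.length_cons]; exact congrArg (· + 1) hm2len⟩
    · intro u hu
      rcases List.mem_cons.1 hu with rfl | hu
      · exact ⟨x, σ x, Ne.symm hx, rfl⟩
      · exact hm2 u hu
    · rw [List.prod_cons, hm2prod, ← mul_assoc, Equiv.swap_mul_self, one_mul]
  have e1 : l.length = minSwaps σ := hlen
  have e2 : m2.length = minSwaps (Equiv.swap x (σ x) * σ) := hm2len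
  omega

end Aux

/-- If i is fixed by π₂ and (i, i₁) is a 2-cycle of π₁ (π₁(i) = i₁, π₁(i₁) = i, i ≠ i₁),
then d_trans(π₁, π₂) = d_trans((i,i₁)·π₁, π₂) + 1. -/
theorem dTrans_remove_two_cycle {m : ℕ} (π₁ π₂ : Equiv.Perm (Fin m)) (i i₁ : Fin m)
    (hfix : π₂ i = i) (hi₁ : π₁ i = i₁) (hi : π₁ i₁ = i) (hne : i ≠ i₁) :
    dTrans π₁ π₂ = dTrans (Equiv.swap i i₁ * π₁) π₂ + 1 := by
  unfold dTrans
  set σ : Equiv.Perm (Fin m) := π₂⁻¹ * π₁ with hσ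
  have hfix' : π₂⁻¹ i = i := by
    conv_lhs => rw [← hfix]
    exact Equiv.symm_apply_apply π₂ i
  have hσi : σ i = π₂⁻¹ i₁ := by rw [hσ, Equiv.Perm.mul_apply, hi₁]
  have hσine : σ i ≠ i := by
    rw [hσi]
    intro h
    apply hne
    have := congrArg π₂ h
    rw [show π₂ (π₂⁻¹ i₁) = i₁ from Equiv.apply_symm_apply π₂ i₁, hfix] at this
    exact this.symm
  have hkey : π₂⁻¹ * (Equiv.swap i i₁ * π₁) = Equiv.swap i (σ i) * σ := by
    rw [← mul_assoc, Equiv.mul_swap_eq_swap_mul, hfix', hσi, hσ, mul_assoc]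
  rw [hkey]
  exact minSwaps_step σ hσine
end

section
/- Let π₁, π₂ ∈ S_m both be involutions without fixed points on their common support of size 2n−2 (products of n−1 disjoint transpositions each). Form the undirected multigraph G on {1,…,2n−2} whose edges are the n−1 transposition pairs of π₁ together with the n−1 transposition pairs of π₂. Then d_trans(π₁, π₂) = 2(n − 1 − |C|), where |C| is the number of connected components of G. -/
open Equiv
open scoped Classical

namespace DTransAux

variable {α : Type*}

local notation "E" => Relation.EqvGen

lemma Et {r : α → α → Prop} {x y z : α} (h : E r x y) (h' : E r y z) : E r x z :=
  Relation.EqvGen.trans _ _ _ h h'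

lemma Es {r : α → α → Prop} {x y : α} (h : E r x y) : E r y x :=
  Relation.EqvGen.symm _ _ h

lemma Err {r : α → α → Prop} (x : α) : E r x x := Relation.EqvGen.refl x

lemma Erel {r : α → α → Prop} {x y : α} (h : r x y) : E r x y := Relation.EqvGen.rel x y h

lemma eqvGen_sub {r p : α → α → Prop} (h : ∀ x y, r x y → E p x y) :
    ∀ {x y}, E r x y → E p x y := by
  intro x y hxy
  induction hxy with
  | rel u v huv => exact h _ _ huv
  | refl u => exact Err u
  | symm u v _ ih => exact Es ih
  | trans u v w _ _ ih1 ih2 => exact Et ih1 ih2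

lemma eqvGen_eq {r : α → α → Prop} (h : ∀ x y, r x y → x = y) :
    ∀ {x y}, E r x y → x = y := by
  intro x y hxy
  induction hxy with
  | rel u v huv => exact h _ _ huv
  | refl u => rfl
  | symm u v _ ih => exact ih.symm
  | trans u v w _ _ ih1 ih2 => exact ih1.trans ih2

section Cls

variable [Fintype α] [DecidableEq α]

noncomputable def cls (R : α → α → Prop) (x : α) : Finset α :=
  Finset.univ.filter fun y => R x y

noncomputable def ncl (R : α → α → Prop) : ℕ :=
  (Finset.univ.image (cls R)).card

lemma mem_cls {R : α → α → Prop} {x y : α} : y ∈ cls R x ↔ R x y := by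
  simp [cls]

lemma ncl_congr {R R' : α → α → Prop} (h : ∀ x y, R x y ↔ R' x y) : ncl R = ncl R' := by
  unfold ncl
  congr 1
  apply Finset.image_congr
  intro x _
  unfold cls
  ext y
  simp [h]

lemma cls_eq_of_rel {r : α → α → Prop} {x z : α} (h : E r x z) :
    cls (E r) x = cls (E r) z := by
  ext y
  simp only [mem_cls]
  exact ⟨fun h' => Et (Es h) h', fun h' => Et h h'⟩

lemma merge_cls {r r' : α → α → Prop} (h : ∀ x y, E r x y → E r' x y) (x : α) :
    (Finset.univ.filter fun y => ∃ z ∈ cls (E r) x, E r' z y) = cls (E r') x := by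
  ext y
  simp only [Finset.mem_filter, Finset.mem_univ, true_and, mem_cls]
  constructor
  · rintro ⟨z, hz, hzy⟩
    exact Et (h _ _ hz) hzy
  · intro hy
    exact ⟨x, Err x, hy⟩

lemma ncl_le_ncl {r r' : α → α → Prop} (h : ∀ x y, E r x y → E r' x y) :
    ncl (E r') ≤ ncl (E r) := by
  classical
  have himg : Finset.univ.image (cls (E r')) =
      (Finset.univ.image (cls (E r))).image
        (fun c => Finset.univ.filter fun y => ∃ z ∈ c, E r' z y) := by
    rw [Finset.image_image]
    apply Finset.image_congr
    intro x _
    exact (merge_cls h x).symm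
  unfold ncl
  rw [himg]
  exact Finset.card_image_le



lemma eqvGen_pair {r : α → α → Prop} {a b x y : α} :
    E (fun u v => r u v ∨ (u = a ∧ v = b)) x y ↔
      E r x y ∨ (E r x a ∧ E r b y) ∨ (E r x b ∧ E r a y) := by
  constructor
  · intro h
    induction h with
    | rel u v huv =>
      rcases huv with h | ⟨rfl, rfl⟩
      · exact Or.inl (Erel h)
      · exact Or.inr (Or.inl ⟨Err _, Err _⟩)
    | refl u => exact Or.inl (Err _)
    | symm u v _ ih =>
      rcases ih with h | ⟨h1, h2⟩ | ⟨h1, h2⟩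
      · exact Or.inl (Es h)
      · exact Or.inr (Or.inr ⟨Es h2, Es h1⟩)
      · exact Or.inr (Or.inl ⟨Es h2, Es h1⟩)
    | trans u v w _ _ ih1 ih2 =>
      rcases ih1 with h | ⟨h1, h2⟩ | ⟨h1, h2⟩ <;>
        rcases ih2 with g | ⟨g1, g2⟩ | ⟨g1, g2⟩
      · exact Or.inl (Et h g)
      · exact Or.inr (Or.inl ⟨Et h g1, g2⟩)
      · exact Or.inr (Or.inr ⟨Et h g1, g2⟩)
      · exact Or.inr (Or.inl ⟨h1, Et h2 g⟩)
      · exact Or.inr (Or.inl ⟨h1, g2⟩)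
      · exact Or.inl (Et h1 g2)
      · exact Or.inr (Or.inr ⟨h1, Et h2 g⟩)
      · exact Or.inl (Et h1 g2)
      · exact Or.inr (Or.inr ⟨h1, g2⟩)
  · have hmono : ∀ {u v}, E r u v → E (fun u v => r u v ∨ (u = a ∧ v = b)) u v :=
      fun h => eqvGen_sub (fun x y hxy => Erel (Or.inl hxy)) h
    have hab : E (fun u v => r u v ∨ (u = a ∧ v = b)) a b := Erel (Or.inr ⟨rfl, rfl⟩)
    rintro (h | ⟨h1, h2⟩ | ⟨h1, h2⟩)
    · exact hmono h
    · exact Et (hmono h1) (Et hab (hmono h2))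
    · exact Et (hmono h1) (Et (Es hab) (hmono h2))

lemma ncl_pair_ge {r : α → α → Prop} (a b : α) :
    ncl (E r) ≤ ncl (E (fun u v => r u v ∨ (u = a ∧ v = b))) + 1 := by
  classical
  set g : Finset α → Finset α :=
    fun c => if a ∈ c ∨ b ∈ c then cls (E r) a ∪ cls (E r) b else c with hg
  have key : ∀ x, cls (E (fun u v => r u v ∨ (u = a ∧ v = b))) x = g (cls (E r) x) := by
    intro x
    by_cases hxa : E r x a
    · have hcond : a ∈ cls (E r) x ∨ b ∈ cls (E r) x := Or.inl (mem_cls.mpr hxa)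
      rw [hg]
      simp only [if_pos hcond]
      ext y
      simp only [mem_cls, Finset.mem_union, eqvGen_pair]
      constructor
      · rintro (h | ⟨h1, h2⟩ | ⟨h1, h2⟩)
        · exact Or.inl (Et (Es hxa) h)
        · exact Or.inr h2
        · exact Or.inl h2
      · rintro (h | h)
        · exact Or.inl (Et hxa h)
        · exact Or.inr (Or.inl ⟨hxa, h⟩)
    · by_cases hxb : E r x b
      · have hcond : a ∈ cls (E r) x ∨ b ∈ cls (E r) x := Or.inr (mem_cls.mpr hxb)
        rw [hg]
        simp only [if_pos hcond]
        ext y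
        simp only [mem_cls, Finset.mem_union, eqvGen_pair]
        constructor
        · rintro (h | ⟨h1, h2⟩ | ⟨h1, h2⟩)
          · exact Or.inr (Et (Es hxb) h)
          · exact (hxa h1).elim
          · exact Or.inl h2
        · rintro (h | h)
          · exact Or.inr (Or.inr ⟨hxb, h⟩)
          · exact Or.inl (Et hxb h)
      · have hcond : ¬ (a ∈ cls (E r) x ∨ b ∈ cls (E r) x) := by
          simp only [mem_cls]
          tauto
        rw [hg]
        simp only [if_neg hcond]
        ext y
        simp only [mem_cls, eqvGen_pair]
        constructor
        · rintro (h | ⟨h1, h2⟩ | ⟨h1, h2⟩)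
          · exact h
          · exact (hxa h1).elim
          · exact (hxb h1).elim
        · exact fun h => Or.inl h
  have himg : Finset.univ.image (cls (E (fun u v => r u v ∨ (u = a ∧ v = b)))) = (Finset.univ.image (cls (E r))).image g := by
    rw [Finset.image_image]
    exact Finset.image_congr fun x _ => key x
  set S : Finset (Finset α) := Finset.univ.image (cls (E r)) with hS
  have hclsmem : ∀ x : α, cls (E r) x ∈ S := fun x => Finset.mem_image_of_mem _ (Finset.mem_univ x)
  have hclass_of_mem : ∀ {c : Finset α}, c ∈ S → ∀ {z : α}, z ∈ c → c = cls (E r) z := by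
    intro c hc z hz
    obtain ⟨x, _, rfl⟩ := Finset.mem_image.mp hc
    exact cls_eq_of_rel (mem_cls.mp hz)
  by_cases hab : E r a b
  · -- g is the identity on S
    have : S.image g = S := by
      have h2 : S.image g = S.image id := by
        apply Finset.image_congr
        intro c hc
        show g c = c
        rw [hg]
        by_cases hcond : a ∈ c ∨ b ∈ c
        · simp only [if_pos hcond]
          have hca : c = cls (E r) a := by
            rcases hcond with h | h
            · exact hclass_of_mem hc h
            · exact (hclass_of_mem hc h).trans (cls_eq_of_rel (Es hab))
          rw [hca, cls_eq_of_rel hab, Finset.union_self, ← cls_eq_of_rel hab]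
        · simp only [if_neg hcond]
      rw [h2, Finset.image_id]
    unfold ncl
    rw [himg, ← hS, this]
    omega
  · have hne : cls (E r) a ≠ cls (E r) b := by
      intro hEq
      have : b ∈ cls (E r) a := hEq ▸ mem_cls.mpr (Err b)
      exact hab (mem_cls.mp this)
    have hgb : g (cls (E r) b) = g (cls (E r) a) := by
      rw [hg]
      simp only [if_pos (Or.inl (mem_cls.mpr (Err a))), if_pos (Or.inr (mem_cls.mpr (Err b)))]
    have himg2 : S.image g = (S.erase (cls (E r) b)).image g := by
      apply Finset.Subset.antisymm
      · intro t ht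
        obtain ⟨c, hc, rfl⟩ := Finset.mem_image.mp ht
        by_cases hcb : c = cls (E r) b
        · subst hcb
          rw [hgb]
          exact Finset.mem_image_of_mem _ (Finset.mem_erase.mpr ⟨hne, hclsmem a⟩)
        · exact Finset.mem_image_of_mem _ (Finset.mem_erase.mpr ⟨hcb, hc⟩)
      · exact Finset.image_subset_image (Finset.erase_subset _ _)
    have hinj : Set.InjOn g (S.erase (cls (E r) b)) := by
      intro c hc c' hc' hgc
      have hcS := Finset.mem_of_mem_erase hc
      have hc'S := Finset.mem_of_mem_erase hc'
      have hcb := (Finset.mem_erase.mp hc).1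
      have hc'b := (Finset.mem_erase.mp hc').1
      by_cases h1 : a ∈ c ∨ b ∈ c <;> by_cases h2 : a ∈ c' ∨ b ∈ c'
      · have e1 : c = cls (E r) a := by
          rcases h1 with h | h
          · exact hclass_of_mem hcS h
          · exact absurd ((hclass_of_mem hcS h)) (by
              intro hEq
              exact hcb hEq)
        have e2 : c' = cls (E r) a := by
          rcases h2 with h | h
          · exact hclass_of_mem hc'S h
          · exact absurd ((hclass_of_mem hc'S h)) (by
              intro hEq
              exact hc'b hEq)
        rw [e1, e2]
      · exfalso
        have : a ∈ g c := by
          rw [hg]; simp only [if_pos h1]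
          exact Finset.mem_union_left _ (mem_cls.mpr (Err a))
        rw [hgc, hg] at this
        simp only [if_neg h2] at this
        exact h2 (Or.inl this)
      · exfalso
        have : a ∈ g c' := by
          rw [hg]; simp only [if_pos h2]
          exact Finset.mem_union_left _ (mem_cls.mpr (Err a))
        rw [← hgc, hg] at this
        simp only [if_neg h1] at this
        exact h1 (Or.inl this)
      · rw [hg] at hgc
        simpa only [if_neg h1, if_neg h2] using hgc
    have hcard1 : ((S.erase (cls (E r) b)).image g).card = S.card - 1 := by
      rw [Finset.card_image_of_injOn hinj, Finset.card_erase_of_mem (hclsmem b)]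
    have hSpos : 1 ≤ S.card := Finset.card_pos.mpr ⟨_, hclsmem b⟩
    unfold ncl
    rw [himg, ← hS, himg2, hcard1]
    omega


lemma ncl_discrete {r : α → α → Prop} (h : ∀ x y, r x y → x = y) :
    ncl (E r) = Fintype.card α := by
  have hcls : ∀ x : α, cls (E r) x = {x} := by
    intro x
    ext y
    simp only [mem_cls, Finset.mem_singleton]
    exact ⟨fun h' => (eqvGen_eq h h').symm, fun h' => by rw [h']; exact Err x⟩
  unfold ncl
  rw [Finset.image_congr (g := fun x => ({x} : Finset α)) (fun x _ => hcls x)]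
  rw [Finset.card_image_of_injective _ Finset.singleton_injective, Finset.card_univ]

lemma ncl_swap_ge {r : α → α → Prop} {τ : Equiv.Perm α} (hτ : τ.IsSwap) :
    ncl (E r) ≤ ncl (E (fun u v => r u v ∨ τ u = v)) + 1 := by
  obtain ⟨a, b, hab, rfl⟩ := hτ
  have hiff : ∀ x y, E (fun u v => r u v ∨ Equiv.swap a b u = v) x y ↔
      E (fun u v => r u v ∨ (u = a ∧ v = b)) x y := by
    intro x y
    constructor
    · apply eqvGen_sub
      intro u v huv
      rcases huv with h | h
      · exact Erel (Or.inl h)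
      · by_cases hu : u = a
        · subst hu
          rw [Equiv.swap_apply_left] at h
          exact h ▸ Erel (Or.inr ⟨rfl, rfl⟩)
        · by_cases hu' : u = b
          · subst hu'
            rw [Equiv.swap_apply_right] at h
            exact h ▸ Es (Erel (Or.inr ⟨rfl, rfl⟩))
          · rw [Equiv.swap_apply_of_ne_of_ne hu hu'] at h
            exact h ▸ Err u
    · apply eqvGen_sub
      intro u v huv
      rcases huv with h | ⟨rfl, rfl⟩
      · exact Erel (Or.inl h)
      · exact Erel (Or.inr (Equiv.swap_apply_left _ _))
  calc ncl (E r) ≤ ncl (E (fun u v => r u v ∨ (u = a ∧ v = b))) + 1 := ncl_pair_ge a b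
    _ = ncl (E (fun u v => r u v ∨ Equiv.swap a b u = v)) + 1 := by
        rw [ncl_congr hiff]

lemma ncl_list {l : List (Equiv.Perm α)} (hl : ∀ τ ∈ l, τ.IsSwap) :
    Fintype.card α ≤ ncl (E (fun u v => ∃ τ ∈ l, τ u = v)) + l.length := by
  induction l with
  | nil =>
    have : ncl (E (fun u v : α => ∃ τ ∈ ([] : List (Equiv.Perm α)), τ u = v)) =
        Fintype.card α := by
      apply ncl_discrete
      intro x y h
      simp at h
    rw [this]
    simp
  | cons τ l ih =>
    have hτ : τ.IsSwap := hl τ List.mem_cons_self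
    have hl' : ∀ τ' ∈ l, τ'.IsSwap := fun τ' h => hl τ' (List.mem_cons_of_mem τ h)
    have hiff : ∀ x y, ((fun u v => ∃ τ' ∈ τ :: l, τ' u = v) x y) ↔
        ((fun u v => (∃ τ' ∈ l, τ' u = v) ∨ τ u = v) x y) := by
      intro x y
      simp only [List.mem_cons]
      constructor
      · rintro ⟨τ', (rfl | h), hv⟩
        · exact Or.inr hv
        · exact Or.inl ⟨τ', h, hv⟩
      · rintro (⟨τ', h, hv⟩ | hv)
        · exact ⟨τ', Or.inr h, hv⟩
        · exact ⟨τ, Or.inl rfl, hv⟩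
    have hcongr : ncl (E (fun u v => ∃ τ' ∈ τ :: l, τ' u = v)) =
        ncl (E (fun u v => (∃ τ' ∈ l, τ' u = v) ∨ τ u = v)) := by
      apply ncl_congr
      intro x y
      exact ⟨fun h => eqvGen_sub (fun u v huv => Erel ((hiff u v).mp huv)) h,
        fun h => eqvGen_sub (fun u v huv => Erel ((hiff u v).mpr huv)) h⟩
    have hstep := ncl_swap_ge (r := fun u v => ∃ τ' ∈ l, τ' u = v) hτ
    beta_reduce at hstep
    have := ih hl'
    rw [hcongr]
    simp only [List.length_cons]
    omega

lemma eqv_prod {l : List (Equiv.Perm α)} :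
    ∀ x, E (fun u v => ∃ τ ∈ l, τ u = v) (l.prod x) x := by
  induction l with
  | nil =>
    intro x
    simp only [List.prod_nil, Equiv.Perm.one_apply]
    exact Err x
  | cons τ l ih =>
    intro x
    have h1 : E (fun u v => ∃ τ' ∈ τ :: l, τ' u = v) (l.prod x) x := by
      refine eqvGen_sub ?_ (ih x)
      rintro u v ⟨τ', h, hv⟩
      exact Erel ⟨τ', List.mem_cons_of_mem τ h, hv⟩
    have h2 : E (fun u v => ∃ τ' ∈ τ :: l, τ' u = v) (τ (l.prod x)) (l.prod x) :=
      Es (Erel ⟨τ, List.mem_cons_self, rfl⟩)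
    have h3 : (τ :: l).prod x = τ (l.prod x) := by
      rw [List.prod_cons, Equiv.Perm.mul_apply]
    rw [h3]
    exact Et h2 h1

lemma length_lower {σ : Equiv.Perm α} {l : List (Equiv.Perm α)}
    (hl : ∀ τ ∈ l, τ.IsSwap) (hp : l.prod = σ) :
    Fintype.card α ≤ l.length + ncl (E (fun u v => σ u = v)) := by
  have hsub : ∀ x y, E (fun u v => σ u = v) x y → E (fun u v => ∃ τ ∈ l, τ u = v) x y := by
    apply eqvGen_sub
    rintro u v rfl
    have : σ u = l.prod u := by rw [hp]
    rw [this]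
    exact Es (eqv_prod u)
  have h1 := ncl_list hl
  have h2 := ncl_le_ncl hsub
  omega

lemma ncl_succ_of_swap {σ : Equiv.Perm α} {x₀ : α} (hx : σ x₀ ≠ x₀) :
    ncl (E (fun u v => σ u = v)) + 1 ≤
      ncl (E (fun u v => (Equiv.swap x₀ (σ x₀) * σ) u = v)) := by
  classical
  set σ' : Equiv.Perm α := Equiv.swap x₀ (σ x₀) * σ with hσ'
  have hfix : σ' x₀ = x₀ := by
    rw [hσ', Equiv.Perm.mul_apply, Equiv.swap_apply_right]
  have hsub : ∀ u v, E (fun u v => σ' u = v) u v → E (fun u v => σ u = v) u v := by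
    apply eqvGen_sub
    rintro u v rfl
    rw [hσ', Equiv.Perm.mul_apply]
    by_cases h1 : σ u = x₀
    · rw [h1, Equiv.swap_apply_left]
      exact Et (Erel h1) (Erel rfl)
    · by_cases h2 : σ u = σ x₀
      · have : u = x₀ := σ.injective h2
        rw [h2, Equiv.swap_apply_right, this]
        exact Err x₀
      · rw [Equiv.swap_apply_of_ne_of_ne h1 h2]
        exact Erel rfl
  have honly : ∀ u v, E (fun u v => σ' u = v) u v → (u = x₀ ↔ v = x₀) := by
    intro u v h
    induction h with
    | rel p q hpq =>
      constructor
      · intro hp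
        rw [← hpq, hp, hfix]
      · intro hq
        have h2 : σ' p = σ' x₀ := by rw [hpq, hq, hfix]
        exact σ'.injective h2
    | refl p => exact Iff.rfl
    | symm p q _ ih => exact ih.symm
    | trans p q w _ _ ih1 ih2 => exact ih1.trans ih2
  set h' : Finset α → Finset α :=
    fun c => Finset.univ.filter fun y => ∃ z ∈ c, E (fun u v => σ u = v) z y with hh'
  have key : ∀ x, h' (cls (E (fun u v => σ' u = v)) x) = cls (E (fun u v => σ u = v)) x :=
    fun x => merge_cls hsub x
  set S' : Finset (Finset α) := Finset.univ.image (cls (E (fun u v => σ' u = v))) with hS'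
  set S : Finset (Finset α) := Finset.univ.image (cls (E (fun u v => σ u = v))) with hS
  have himg : S = S'.image h' := by
    rw [hS, hS', Finset.image_image]
    exact (Finset.image_congr fun x _ => (key x).symm)
  have hneq : cls (E (fun u v => σ' u = v)) x₀ ≠ cls (E (fun u v => σ' u = v)) (σ x₀) := by
    intro hEq
    have hx0mem : x₀ ∈ cls (E (fun u v => σ' u = v)) x₀ := mem_cls.mpr (Err x₀)
    rw [hEq] at hx0mem
    have := honly _ _ (mem_cls.mp hx0mem)
    exact hx ((this.mpr rfl))
  have hfib : h' (cls (E (fun u v => σ' u = v)) x₀) =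
      h' (cls (E (fun u v => σ' u = v)) (σ x₀)) := by
    rw [key, key]
    exact cls_eq_of_rel (Erel rfl)
  have himg2 : S'.image h' = (S'.erase (cls (E (fun u v => σ' u = v)) x₀)).image h' := by
    apply Finset.Subset.antisymm
    · intro t ht
      obtain ⟨c, hc, rfl⟩ := Finset.mem_image.mp ht
      by_cases hcx : c = cls (E (fun u v => σ' u = v)) x₀
      · subst hcx
        rw [hfib]
        refine Finset.mem_image_of_mem _ (Finset.mem_erase.mpr ⟨(Ne.symm hneq), ?_⟩)
        exact Finset.mem_image_of_mem _ (Finset.mem_univ _)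
      · exact Finset.mem_image_of_mem _ (Finset.mem_erase.mpr ⟨hcx, hc⟩)
    · exact Finset.image_subset_image (Finset.erase_subset _ _)
  have hx0S' : cls (E (fun u v => σ' u = v)) x₀ ∈ S' :=
    Finset.mem_image_of_mem _ (Finset.mem_univ _)
  have hc1 : S.card ≤ (S'.erase (cls (E (fun u v => σ' u = v)) x₀)).card := by
    rw [himg, himg2]
    exact Finset.card_image_le
  have hc2 : (S'.erase (cls (E (fun u v => σ' u = v)) x₀)).card = S'.card - 1 :=
    Finset.card_erase_of_mem hx0S'
  have hpos : 1 ≤ S'.card := Finset.card_pos.mpr ⟨_, hx0S'⟩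
  unfold ncl
  rw [← hS, ← hS']
  omega

lemma exists_swap_list (σ : Equiv.Perm α) :
    ∃ l : List (Equiv.Perm α), (∀ τ ∈ l, τ.IsSwap) ∧ l.prod = σ ∧
      l.length + ncl (E (fun u v => σ u = v)) ≤ Fintype.card α := by
  classical
  generalize hn : σ.support.card = n
  induction n using Nat.strong_induction_on generalizing σ with
  | _ n ih =>
    by_cases hσ : σ = 1
    · subst hσ
      refine ⟨[], by simp, by simp, ?_⟩
      have : ncl (E (fun u v : α => (1 : Equiv.Perm α) u = v)) = Fintype.card α := by
        apply ncl_discrete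
        intro x y h
        simpa using h
      rw [this]
      simp
    · have hex : ∃ x, σ x ≠ x := by
        by_contra hall
        push_neg at hall
        exact hσ (Equiv.ext hall)
      obtain ⟨x₀, hx₀⟩ := hex
      set σ' : Equiv.Perm α := Equiv.swap x₀ (σ x₀) * σ with hσ'
      have hcard : σ'.support.card < n := by
        rw [← hn]
        exact Equiv.Perm.card_support_swap_mul hx₀
      obtain ⟨l, hls, hlp, hlen⟩ := ih _ hcard σ' rfl
      refine ⟨Equiv.swap x₀ (σ x₀) :: l, ?_, ?_, ?_⟩
      · intro τ hτ
        rcases List.mem_cons.mp hτ with rfl | h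
        · exact ⟨x₀, σ x₀, Ne.symm hx₀, rfl⟩
        · exact hls τ h
      · rw [List.prod_cons, hlp, hσ', ← mul_assoc, Equiv.swap_mul_self, one_mul]
      · have hkey := ncl_succ_of_swap hx₀
        rw [← hσ'] at hkey
        simp only [List.length_cons]
        omega

lemma minSwaps_add_ncl (σ : Equiv.Perm α) :
    minSwaps σ + ncl (E (fun u v => σ u = v)) = Fintype.card α := by
  obtain ⟨l, hs, hp, hle⟩ := exists_swap_list σ
  have hne : {k | ∃ l : List (Equiv.Perm α), (∀ τ ∈ l, τ.IsSwap) ∧ l.prod = σ ∧ l.length = k}.Nonempty :=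
    ⟨l.length, l, hs, hp, rfl⟩
  have hmem := Nat.sInf_mem hne
  obtain ⟨l₀, hs₀, hp₀, hlen₀⟩ := hmem
  have h1 : Fintype.card α ≤ minSwaps σ + ncl (E (fun u v => σ u = v)) := by
    have := length_lower hs₀ hp₀
    unfold minSwaps
    omega
  have h2 : minSwaps σ ≤ l.length := Nat.sInf_le ⟨l, hs, hp, rfl⟩
  omega

lemma pow_of_eqvGen {σ : Equiv.Perm α} {x y : α}
    (h : E (fun u v => σ u = v) x y) : ∃ k : ℕ, (σ ^ k) x = y := by
  induction h with
  | rel p q hpq => exact ⟨1, by simpa using hpq⟩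
  | refl p => exact ⟨0, rfl⟩
  | symm p q _ ih =>
    obtain ⟨k, hk⟩ := ih
    have hN : 0 < orderOf σ := orderOf_pos σ
    refine ⟨k * orderOf σ - k, ?_⟩
    have hsum : (k * orderOf σ - k) + k = k * orderOf σ := by
      have : k ≤ k * orderOf σ := Nat.le_mul_of_pos_right k hN
      omega
    have : (σ ^ (k * orderOf σ - k)) ((σ ^ k) p) = (σ ^ (k * orderOf σ)) p := by
      rw [← Equiv.Perm.mul_apply, ← pow_add, hsum]
    rw [← hk, this, mul_comm, pow_mul, pow_orderOf_eq_one, one_pow, Equiv.Perm.one_apply]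
  | trans p q w _ _ ih1 ih2 =>
    obtain ⟨k1, hk1⟩ := ih1
    obtain ⟨k2, hk2⟩ := ih2
    refine ⟨k2 + k1, ?_⟩
    rw [pow_add, Equiv.Perm.mul_apply, hk1, hk2]

section Main

lemma ncl_sigma_eq (π₁ π₂ : Equiv.Perm α) (h₁ : π₁ * π₁ = 1) (h₂ : π₂ * π₂ = 1)
    (hf₁ : ∀ x, π₁ x ≠ x) (hf₂ : ∀ x, π₂ x ≠ x) :
    ncl (E (fun u v => (π₂⁻¹ * π₁) u = v)) =
      2 * ncl (E (fun a b => π₁ a = b ∨ π₂ a = b)) := by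
  classical
  have hp1 : ∀ x, π₁ (π₁ x) = x := by
    intro x
    have := congrArg (fun π : Equiv.Perm α => π x) h₁
    simpa [Equiv.Perm.mul_apply] using this
  have hp2 : ∀ x, π₂ (π₂ x) = x := by
    intro x
    have := congrArg (fun π : Equiv.Perm α => π x) h₂
    simpa [Equiv.Perm.mul_apply] using this
  have hinv : π₂⁻¹ = π₂ := inv_eq_of_mul_eq_one_right h₂
  set σ : Equiv.Perm α := π₂⁻¹ * π₁ with hσdef
  have hσ : ∀ x, σ x = π₂ (π₁ x) := by
    intro x
    rw [hσdef, hinv, Equiv.Perm.mul_apply]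
  -- abbreviations
  set E0 : α → α → Prop := E (fun u v => σ u = v) with hE0
  set RG : α → α → Prop := E (fun a b => π₁ a = b ∨ π₂ a = b) with hRG
  -- conjugation: π₁ maps σ-orbits to σ-orbits
  have hA : ∀ x y, E0 x y → E0 (π₁ x) (π₁ y) := by
    intro x y h
    rw [hE0] at h ⊢
    induction h with
    | rel p q hpq =>
      have : σ (π₁ q) = π₁ p := by
        rw [hσ, hp1, ← hpq, hσ, hp2]
      exact Es (Erel this)
    | refl p => exact Err _
    | symm p q _ ih => exact Es ih
    | trans p q w _ _ ih1 ih2 => exact Et ih1 ih2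
  -- conjugation identities
  have hconj1 : ∀ j : ℕ, σ ^ j * π₁ * σ ^ j = π₁ := by
    intro j
    induction j with
    | zero => simp
    | succ j ih =>
      have hbase : σ * π₁ * σ = π₁ := by
        apply Equiv.ext
        intro x
        simp only [Equiv.Perm.mul_apply]
        rw [hσ, hσ, hp1, hp2]
      calc σ ^ (j+1) * π₁ * σ ^ (j+1) = σ ^ j * (σ * π₁ * σ) * σ ^ j := by
            group
        _ = π₁ := by rw [hbase, ih]
  have hconj2 : ∀ j : ℕ, σ ^ j * π₂ * σ ^ j = π₂ := by
    intro j
    induction j with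
    | zero => simp
    | succ j ih =>
      have hbase : σ * π₂ * σ = π₂ := by
        apply Equiv.ext
        intro x
        simp only [Equiv.Perm.mul_apply]
        rw [hσ, hσ, hp2, hp1]
      calc σ ^ (j+1) * π₂ * σ ^ (j+1) = σ ^ j * (σ * π₂ * σ) * σ ^ j := by
            group
        _ = π₂ := by rw [hbase, ih]
  -- x and π₁ x are never in the same σ-orbit
  have hC : ∀ x, ¬ E0 x (π₁ x) := by
    intro x h
    obtain ⟨k, hk⟩ := pow_of_eqvGen (hE0 ▸ h)
    rcases Nat.even_or_odd k with ⟨j, hj⟩ | ⟨j, hj⟩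
    · -- k = j + j : π₁ fixes σ^j x
      apply hf₁ ((σ ^ j) x)
      have hc := congrArg (fun π : Equiv.Perm α => π x) (hconj1 j)
      simp only [Equiv.Perm.mul_apply] at hc
      have hkx : π₁ x = (σ ^ j) ((σ ^ j) x) := by
        rw [← hk, hj, pow_add, Equiv.Perm.mul_apply]
      have : (σ ^ j) (π₁ ((σ ^ j) x)) = (σ ^ j) ((σ ^ j) x) := by
        rw [hc, hkx]
      exact (σ ^ j).injective this
    · -- k = 2j+1 : π₂ fixes σ^(j+1) x
      apply hf₂ ((σ ^ (j+1)) x)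
      have hc := congrArg (fun π : Equiv.Perm α => π x) (hconj2 (j+1))
      simp only [Equiv.Perm.mul_apply] at hc
      have hπ₂x : π₂ x = (σ ^ (j+1)) ((σ ^ (j+1)) x) := by
        have h1 : π₂ x = σ (π₁ x) := by rw [hσ, hp1]
        have h2 : σ (π₁ x) = (σ ^ (k+1)) x := by
          rw [← hk, ← Equiv.Perm.mul_apply, ← pow_succ']
        rw [h1, h2, hj]
        have : 2 * j + 1 + 1 = (j + 1) + (j + 1) := by omega
        rw [this, pow_add, Equiv.Perm.mul_apply]
      have : (σ ^ (j+1)) (π₂ ((σ ^ (j+1)) x)) = (σ ^ (j+1)) ((σ ^ (j+1)) x) := by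
        rw [hc, hπ₂x]
      exact (σ ^ (j+1)).injective this
  -- characterization of the component relation
  have hE0G : ∀ x y, E0 x y → RG x y := by
    intro x y h
    rw [hE0] at h
    rw [hRG]
    refine eqvGen_sub ?_ h
    intro u v huv
    have s1 : E (fun a b => π₁ a = b ∨ π₂ a = b) u (π₁ u) := Erel (Or.inl rfl)
    have s2 : E (fun a b => π₁ a = b ∨ π₂ a = b) (π₁ u) (π₂ (π₁ u)) := Erel (Or.inr rfl)
    have : π₂ (π₁ u) = v := by rw [← hσ, huv]
    exact Et s1 (this ▸ s2)
  have hB : ∀ x y, RG x y ↔ (E0 x y ∨ E0 (π₁ x) y) := by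
    intro x y
    constructor
    · intro h
      rw [hRG] at h
      induction h with
      | rel p q hpq =>
        rcases hpq with h | h
        · exact Or.inr (h ▸ Err _)
        · refine Or.inr (Erel ?_)
          show σ (π₁ p) = q
          rw [hσ, hp1, h]
      | refl p => exact Or.inl (Err _)
      | symm p q _ ih =>
        rcases ih with h | h
        · exact Or.inl (Es h)
        · have := hA _ _ h
          rw [hp1] at this
          exact Or.inr (Es this)
      | trans p q w _ _ ih1 ih2 =>
        rcases ih1 with h1 | h1 <;> rcases ih2 with h2 | h2
        · exact Or.inl (Et h1 h2)
        · exact Or.inr (Et (by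
            have := hA _ _ h1
            exact this) h2)
        · exact Or.inr (Et h1 h2)
        · refine Or.inl (Et ?_ h2)
          have := hA _ _ h1
          rw [hp1] at this
          exact this
    · rintro (h | h)
      · exact hE0G _ _ h
      · have hx : RG x (π₁ x) := hRG ▸ Erel (Or.inl rfl)
        exact Et hx (hE0G _ _ h)
  -- the counting argument
  set h' : Finset α → Finset α :=
    fun c => Finset.univ.filter fun y => ∃ z ∈ c, RG z y with hh'
  have key : ∀ x, h' (cls E0 x) = cls RG x := by
    intro x
    rw [hE0, hRG] at *
    exact merge_cls (fun u v h => hE0G u v h) x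
  set S : Finset (Finset α) := Finset.univ.image (cls E0) with hS
  set T : Finset (Finset α) := Finset.univ.image (cls RG) with hT
  have himg : S.image h' = T := by
    rw [hS, hT, Finset.image_image]
    exact Finset.image_congr fun x _ => key x
  have hcount := Finset.card_eq_sum_card_image h' S
  rw [himg] at hcount
  have hfiber : ∀ t ∈ T, (S.filter fun c => h' c = t).card = 2 := by
    intro t ht
    obtain ⟨x, _, rfl⟩ := Finset.mem_image.mp ht
    have hfib : (S.filter fun c => h' c = cls RG x) = {cls E0 x, cls E0 (π₁ x)} := by
      ext c
      simp only [Finset.mem_filter, Finset.mem_insert, Finset.mem_singleton]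
      constructor
      · rintro ⟨hcS, hct⟩
        obtain ⟨z, _, rfl⟩ := Finset.mem_image.mp hcS
        rw [key z] at hct
        have hzx : RG x z := by
          have : z ∈ cls RG z := mem_cls.mpr (Relation.EqvGen.refl z)
          rw [hct] at this
          exact mem_cls.mp this
        rcases (hB x z).mp hzx with h | h
        · exact Or.inl ((cls_eq_of_rel (hE0 ▸ h)).symm)
        · exact Or.inr ((cls_eq_of_rel (hE0 ▸ h)).symm)
      · rintro (rfl | rfl)
        · exact ⟨Finset.mem_image_of_mem _ (Finset.mem_univ x), key x⟩
        · refine ⟨Finset.mem_image_of_mem _ (Finset.mem_univ (π₁ x)), ?_⟩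
          rw [key (π₁ x)]
          have : RG x (π₁ x) := hRG ▸ Erel (Or.inl rfl)
          exact (cls_eq_of_rel (hRG ▸ this)).symm
    rw [hfib]
    have hne : cls E0 x ≠ cls E0 (π₁ x) := by
      intro hEq
      have : π₁ x ∈ cls E0 x := hEq ▸ mem_cls.mpr (Relation.EqvGen.refl (π₁ x))
      exact hC x (mem_cls.mp this)
    rw [Finset.card_insert_of_notMem (by simpa using hne), Finset.card_singleton]
  have hsum : ∑ t ∈ T, (S.filter fun c => h' c = t).card = 2 * T.card := by
    rw [Finset.sum_congr rfl hfiber, Finset.sum_const, smul_eq_mul, mul_comm]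
  show S.card = 2 * T.card
  rw [hcount, hsum]

end Main

end Cls
end DTransAux

/-- Let π₁, π₂ be fixed-point-free involutions of the 2n−2 points (each a product of
n−1 disjoint transpositions).  Form the undirected multigraph G on the points whose
edges are the transposition pairs of π₁ together with those of π₂; its connected
components are the equivalence classes of the relation generated by a ∼ π₁ a and
a ∼ π₂ a.  Then d_trans(π₁, π₂) = 2(n − 1 − |C|), where |C| is the number of
connected components of G. -/
theorem dTrans_involutions_eq_components {n : ℕ} (π₁ π₂ : Equiv.Perm (Fin (2 * n - 2)))
    (h₁ : π₁ * π₁ = 1) (h₂ : π₂ * π₂ = 1)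
    (hf₁ : ∀ x, π₁ x ≠ x) (hf₂ : ∀ x, π₂ x ≠ x)
    (C : Finset (Finset (Fin (2 * n - 2))))
    (hC : C = Finset.univ.image fun x => Finset.univ.filter fun y =>
      Relation.EqvGen (fun a b => π₁ a = b ∨ π₂ a = b) x y) :
    dTrans π₁ π₂ = 2 * (n - 1 - C.card) := by
  have hkey1 := DTransAux.minSwaps_add_ncl (π₂⁻¹ * π₁)
  have hkey2 := DTransAux.ncl_sigma_eq π₁ π₂ h₁ h₂ hf₁ hf₂
  have hCcard : C.card =
      DTransAux.ncl (Relation.EqvGen (fun a b => π₁ a = b ∨ π₂ a = b)) := by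
    rw [hC]
    rfl
  have hm : Fintype.card (Fin (2 * n - 2)) = 2 * n - 2 := Fintype.card_fin _
  show minSwaps (π₂⁻¹ * π₁) = 2 * (n - 1 - C.card)
  omega
end
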